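/- arXiv:2104.07276 — 3 statements merged into one kernel-verified Lean document; each statement's English description precedes it below -/
import Mathlib

section
/- Let γ ∈ (0,1), R > 0, ε_v > 0, and set ε₀ = R/(1−γ). Let h ≥ 1 be a natural number such that γ^h ≤ ε_v(1−γ)/(2R). Define ε_b = γ^(h−1)/h and, for 0 ≤ i ≤ h−1, δ_i = ε_b/γ^(h−1−i). Suppose a sequence of nonnegative reals e₀, e₁, …, e_h satisfies e₀ ≤ ε₀ and e_{i+1} ≤ γ(ε₀·δ_i + e_i) for all 0 ≤ i ≤ h−1. Then e_h ≤ ε_v. -/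
/-!
Unrolling `e (i+1) ≤ γ (ε₀ δ_i + e i)` from the leaves gives
`e h ≤ γ^h e 0 + ∑_{i<h} γ^(h-i) ε₀ δ_i`. The radii `δ_i = γ^(h-1)/(h γ^(h-1-i))` are chosen
so that every level contributes the same amount `γ^h ε₀ / h` to this sum, so the whole
discretization error equals the leaf error `γ^h ε₀`, and the choice of horizon makes
`2 γ^h ε₀ ≤ ε_v`.
-/

open Finset

theorem le_pow_mul_add_sum_of_le_mul_add {α : Type*} [Semiring α] [PartialOrder α]
    [IsOrderedRing α] {γ : α} (hγ : 0 ≤ γ) {e c : ℕ → α} {n : ℕ}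
    (hrec : ∀ i < n, e (i + 1) ≤ γ * (c i + e i)) :
    e n ≤ γ ^ n * e 0 + ∑ i ∈ range n, γ ^ (n - i) * c i := by
  induction n with
  | zero => simp
  | succ n ih =>
    have hsum : ∑ i ∈ range n, γ ^ (n + 1 - i) * c i = γ * ∑ i ∈ range n, γ ^ (n - i) * c i := by
      rw [mul_sum]
      refine sum_congr rfl fun i hi => ?_
      rw [Nat.sub_add_comm (mem_range.mp hi).le, pow_succ', mul_assoc]
    calc e (n + 1) ≤ γ * (c n + e n) := hrec n n.lt_succ_self
      _ ≤ γ * (c n + (γ ^ n * e 0 + ∑ i ∈ range n, γ ^ (n - i) * c i)) := by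
        gcongr
        exact ih fun i hi => hrec i (hi.trans n.lt_succ_self)
      _ = γ ^ (n + 1) * e 0 + ∑ i ∈ range (n + 1), γ ^ (n + 1 - i) * c i := by
        rw [sum_range_succ, hsum, Nat.add_sub_cancel_left, pow_one, pow_succ']
        noncomm_ring

theorem pow_sub_mul_div_pow_sub_one_sub {K : Type*} [Field K] {γ : K} (hγ : γ ≠ 0)
    {h i : ℕ} (hi : i < h) (x : K) :
    γ ^ (h - i) * (x / γ ^ (h - 1 - i)) = γ * x := by
  rw [show h - i = h - 1 - i + 1 by omega, pow_succ]
  field_simp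

theorem planning_error_general
    (γ R εv : ℝ) (hγ0 : 0 < γ) (hγ1 : γ < 1) (hR : 0 < R)
    (h : ℕ) (hh : 1 ≤ h)
    (hgh : γ ^ h ≤ εv * (1 - γ) / (2 * R))
    (e : ℕ → ℝ)
    (he0 : e 0 ≤ R / (1 - γ))
    (hrec : ∀ i < h,
      e (i + 1) ≤ γ * ((R / (1 - γ)) * ((γ ^ (h - 1) / (h : ℝ)) / γ ^ (h - 1 - i)) + e i)) :
    e h ≤ εv := by
  set ε₀ := R / (1 - γ) with hε₀
  have h1γ : 0 < 1 - γ := sub_pos.mpr hγ1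
  have hsum : ∑ i ∈ range h, γ ^ (h - i) * (ε₀ * (γ ^ (h - 1) / h / γ ^ (h - 1 - i)))
      = γ ^ h * ε₀ := by
    calc _ = ∑ _i ∈ range h, ε₀ * (γ * (γ ^ (h - 1) / h)) := sum_congr rfl fun i hi => by
          rw [mul_left_comm, pow_sub_mul_div_pow_sub_one_sub hγ0.ne' (mem_range.mp hi)]
      _ = γ ^ h * ε₀ := by
          rw [sum_const, card_range, nsmul_eq_mul, mul_div_assoc', mul_pow_sub_one (by omega)]
          field_simp
  have hhorizon : 2 * (γ ^ h * ε₀) ≤ εv := by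
    calc 2 * (γ ^ h * ε₀) ≤ 2 * (εv * (1 - γ) / (2 * R) * ε₀) := by gcongr
      _ = εv := by rw [hε₀]; field_simp
  calc e h ≤ γ ^ h * e 0 + γ ^ h * ε₀ := hsum ▸ le_pow_mul_add_sum_of_le_mul_add hγ0.le hrec
    _ ≤ γ ^ h * ε₀ + γ ^ h * ε₀ := by gcongr
    _ ≤ εv := by linarith

/-- Abstract algebraic core of the planning error theorem for adaptive belief
discretization in POMDPs: with leaf error and Lipschitz bound `ε₀ = R/(1-γ)`,
discretization radii `δ i = ε_b / γ^(h-1-i)` with `ε_b = γ^(h-1)/h`, and horizon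
`h` satisfying `γ^h ≤ ε_v (1-γ) / (2R)`, the root error `e h` is at most `ε_v`. -/
theorem planning_error
    (γ R εv : ℝ) (hγ0 : 0 < γ) (hγ1 : γ < 1) (hR : 0 < R) (hεv : 0 < εv)
    (h : ℕ) (hh : 1 ≤ h)
    (hgh : γ ^ h ≤ εv * (1 - γ) / (2 * R))
    (e : ℕ → ℝ) (hepos : ∀ i, 0 ≤ e i)
    (he0 : e 0 ≤ R / (1 - γ))
    (hrec : ∀ i < h,
      e (i + 1) ≤ γ * ((R / (1 - γ)) * ((γ ^ (h - 1) / (h : ℝ)) / γ ^ (h - 1 - i)) + e i)) :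
    e h ≤ εv :=
  planning_error_general γ R εv hγ0 hγ1 hR h hh hgh e he0 hrec
end

section
/- Let n ≥ 1 and k ≥ 1 be natural numbers. There exists a finite set C of points of the standard probability simplex Δ^n = {b : Fin n → ℝ | b(i) ≥ 0 for all i, ∑_i b(i) = 1} with |C| ≤ (k+1)^n such that for every b ∈ Δ^n there exists c ∈ C with ∑_{i} |b(i) − c(i)| ≤ n/k. -/
/-- Explicit bound on the covering number of the belief simplex: there is a
proper ℓ¹-cover of the probability simplex over `Fin n` of radius `n/k` and
cardinality at most `(k+1)^n`. -/
theorem simplex_covering_number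
    (n k : ℕ) (hn : 1 ≤ n) (hk : 1 ≤ k) :
    ∃ C : Finset (Fin n → ℝ),
      (∀ c ∈ C, (∀ i, 0 ≤ c i) ∧ ∑ i, c i = 1) ∧
      C.card ≤ (k + 1) ^ n ∧
      ∀ b : Fin n → ℝ, (∀ i, 0 ≤ b i) → ∑ i, b i = 1 →
        ∃ c ∈ C, ∑ i, |b i - c i| ≤ (n : ℝ) / (k : ℝ) := by
  have kpos : (0:ℝ) < k := by exact_mod_cast hk
  refine ⟨(Finset.univ.filter (fun m : Fin n → Fin (k+1) => ∑ i, (m i : ℕ) = k)).image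
      (fun m i => (m i : ℝ) / k), ?_, ?_, ?_⟩
  · rintro c hc
    simp only [Finset.mem_image, Finset.mem_filter] at hc
    obtain ⟨m, ⟨-, hm⟩, rfl⟩ := hc
    refine ⟨fun i => div_nonneg (Nat.cast_nonneg _) kpos.le, ?_⟩
    rw [← Finset.sum_div]
    rw [show (∑ i, ((m i : ℕ) : ℝ)) = ((∑ i, (m i : ℕ) : ℕ) : ℝ) by push_cast; ring, hm]
    exact div_self kpos.ne'
  · calc _ ≤ (Finset.univ.filter (fun m : Fin n → Fin (k+1) => ∑ i, (m i : ℕ) = k)).card :=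
          Finset.card_image_le
      _ ≤ Finset.univ.card := Finset.card_filter_le _ _
      _ = (k+1)^n := by simp [Fintype.card_fun]
  · intro b hb hsum
    set N : ℕ := ∑ i, ⌊(k:ℝ) * b i⌋₊ with hN
    have hfloor_le : ∀ i : Fin n, ((⌊(k:ℝ) * b i⌋₊ : ℝ)) ≤ (k:ℝ) * b i :=
      fun i => Nat.floor_le (mul_nonneg kpos.le (hb i))
    have hNle : (N:ℝ) ≤ k := by
      push_cast [hN]
      calc ∑ i, ((⌊(k:ℝ) * b i⌋₊ : ℝ)) ≤ ∑ i, (k:ℝ) * b i :=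
            Finset.sum_le_sum fun i _ => hfloor_le i
        _ = k := by rw [← Finset.mul_sum, hsum, mul_one]
    have hNk : N ≤ k := by exact_mod_cast hNle
    set d : ℕ := k - N with hd
    have hdcast : (d:ℝ) = (k:ℝ) - N := by
      rw [hd]; push_cast [Nat.cast_sub hNk]; ring
    have hdn : d < n := by
      have : (d:ℝ) < n := by
        rw [hdcast]
        have : (k:ℝ) - N = ∑ i, ((k:ℝ) * b i - ⌊(k:ℝ) * b i⌋₊) := by
          rw [Finset.sum_sub_distrib, ← Finset.mul_sum, hsum, mul_one, hN]
          push_cast; ring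
        rw [this]
        calc ∑ i, ((k:ℝ) * b i - ⌊(k:ℝ) * b i⌋₊) < ∑ _i : Fin n, (1:ℝ) := by
              apply Finset.sum_lt_sum_of_nonempty
              · exact Finset.univ_nonempty_iff.2 ⟨⟨0, hn⟩⟩
              · intro i _
                have := Nat.lt_floor_add_one ((k:ℝ) * b i)
                linarith
          _ = n := by simp
      exact_mod_cast this
    set m : Fin n → ℕ := fun i => ⌊(k:ℝ) * b i⌋₊ + (if i.val < d then 1 else 0) with hm
    have hmsum : ∑ i, m i = k := by
      rw [hm]
      rw [Finset.sum_add_distrib, ← hN]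
      have : ∑ i : Fin n, (if i.val < d then 1 else 0) = d := by
        rw [Fin.sum_univ_eq_sum_range (fun j => if j < d then 1 else 0)]
        have : ∀ j, (if j < d then 1 else 0) = (if j ∈ Finset.range d then 1 else 0) := by
          intro j; simp
        simp_rw [this]
        rw [Finset.sum_ite_mem]
        have : Finset.range n ∩ Finset.range d = Finset.range d := by
          ext j; simp; omega
        simp [this]
      rw [this]
      omega
    have hmle : ∀ i, m i ≤ k := by
      intro i
      rw [← hmsum]
      exact Finset.single_le_sum (fun j _ => Nat.zero_le _) (Finset.mem_univ i)
    refine ⟨fun i => ((m i : ℕ) : ℝ) / k, ?_, ?_⟩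
    · apply Finset.mem_image.2
      refine ⟨fun i => ⟨m i, Nat.lt_succ_of_le (hmle i)⟩, ?_, rfl⟩
      simp [hmsum]
    · have key : ∀ i : Fin n, |b i - (m i : ℝ) / k| ≤ 1 / k := by
        intro i
        have h1 : ((⌊(k:ℝ) * b i⌋₊ : ℝ)) ≤ (k:ℝ) * b i := hfloor_le i
        have h2 : (k:ℝ) * b i < ⌊(k:ℝ) * b i⌋₊ + 1 := Nat.lt_floor_add_one _
        have hlb : ((⌊(k:ℝ) * b i⌋₊ : ℝ)) ≤ (m i : ℝ) := by
          rw [hm]; push_cast; split <;> simp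
        have hub : ((m i : ℕ) : ℝ) ≤ ⌊(k:ℝ) * b i⌋₊ + 1 := by
          rw [hm]; push_cast; split <;> simp
        have e : b i - (m i : ℝ) / k = ((k:ℝ) * b i - m i) / k := by
          field_simp
        have habs : |(k:ℝ) * b i - m i| ≤ 1 := abs_le.2 ⟨by nlinarith, by nlinarith⟩
        rw [e, abs_div, abs_of_pos kpos]
        gcongr
      calc ∑ i, |b i - (m i : ℝ) / k| ≤ ∑ _i : Fin n, 1 / (k:ℝ) :=
            Finset.sum_le_sum fun i _ => key i
        _ = (n:ℝ) / k := by simp [Finset.sum_const]; ring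
end

section
/- Let γ ∈ (0,1), ε > 0, n ≥ 1 a natural number, and h₀ a natural number such that ε ≤ γ^{h₀}. Then ∑_{d=0}^{h₀} (1 + ⌊γ^d/ε⌋)^n ≤ exp(n/(ε(1−γ))). -/
lemma sum_le_prod_of_two_le {s : Finset ℕ} {f : ℕ → ℝ}
    (h : ∀ i ∈ s, 2 ≤ f i) : ∑ i ∈ s, f i ≤ ∏ i ∈ s, f i := by
  induction s using Finset.induction with
  | empty => simp
  | @insert a s hnot ih =>
    rw [Finset.sum_insert hnot, Finset.prod_insert hnot]
    have ha : 2 ≤ f a := h a (Finset.mem_insert_self _ _)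
    have hs : ∑ i ∈ s, f i ≤ ∏ i ∈ s, f i := ih fun i hi => h i (Finset.mem_insert_of_mem hi)
    rcases s.eq_empty_or_nonempty with rfl | hne
    · simp only [Finset.sum_empty, Finset.prod_empty]; linarith
    · have hcard : 1 ≤ s.card := Finset.card_pos.mpr hne
      have h2 : (s.card : ℝ) * 2 ≤ ∑ i ∈ s, f i := by
        have := Finset.card_nsmul_le_sum s f 2 (fun i hi => h i (Finset.mem_insert_of_mem hi))
        simpa [nsmul_eq_mul] using this
      have hp2 : 2 ≤ ∏ i ∈ s, f i := by
        have : (2 : ℝ) ≤ (s.card : ℝ) * 2 := by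
          have : (1 : ℝ) ≤ (s.card : ℝ) := by exact_mod_cast hcard
          nlinarith
        linarith
      nlinarith

/-- Memory bound for the adaptively discretized belief tree: the grid at depth
`d` has `(1 + ⌊γ^d/ε⌋)^n` points, and provided `ε ≤ γ^h₀` the total memory over
depths `0, …, h₀` is bounded by `exp (n/(ε(1-γ)))`. -/
theorem memory_bound
    (γ ε : ℝ) (hγ0 : 0 < γ) (hγ1 : γ < 1) (hε : 0 < ε)
    (n : ℕ) (hn : 1 ≤ n) (h₀ : ℕ) (hh : ε ≤ γ ^ h₀) :
    ∑ d ∈ Finset.range (h₀ + 1), (1 + (⌊γ ^ d / ε⌋₊ : ℝ)) ^ n ≤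
      Real.exp ((n : ℝ) / (ε * (1 - γ))) := by
  set f : ℕ → ℝ := fun d => (1 + (⌊γ ^ d / ε⌋₊ : ℝ)) ^ n with hf
  have hterm2 : ∀ d ∈ Finset.range (h₀ + 1), 2 ≤ f d := by
    intro d hd
    rw [Finset.mem_range] at hd
    have hdle : d ≤ h₀ := Nat.lt_succ_iff.mp hd
    have hpow : γ ^ h₀ ≤ γ ^ d := pow_le_pow_of_le_one hγ0.le hγ1.le hdle
    have h1 : (1 : ℝ) ≤ γ ^ d / ε := (one_le_div hε).mpr (hh.trans hpow)
    have hfl : 1 ≤ ⌊γ ^ d / ε⌋₊ := Nat.le_floor (by exact_mod_cast h1)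
    have : (2 : ℝ) ≤ 1 + (⌊γ ^ d / ε⌋₊ : ℝ) := by
      have : (1 : ℝ) ≤ (⌊γ ^ d / ε⌋₊ : ℝ) := by exact_mod_cast hfl
      linarith
    calc (2 : ℝ) = 2 ^ 1 := by norm_num
    _ ≤ (1 + (⌊γ ^ d / ε⌋₊ : ℝ)) ^ n :=
        pow_le_pow_left₀ (by norm_num) this 1 |>.trans
          (pow_le_pow_right₀ (by linarith) hn)
  have hstep : ∀ d, f d ≤ Real.exp ((n : ℝ) * (γ ^ d / ε)) := by
    intro d
    have hx : (0 : ℝ) ≤ γ ^ d / ε := div_nonneg (pow_nonneg hγ0.le d) hε.le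
    have h1 : 1 + (⌊γ ^ d / ε⌋₊ : ℝ) ≤ 1 + γ ^ d / ε := by
      have := Nat.floor_le hx
      linarith
    have h2 : 1 + γ ^ d / ε ≤ Real.exp (γ ^ d / ε) := by
      have := Real.add_one_le_exp (γ ^ d / ε); linarith
    calc f d ≤ (Real.exp (γ ^ d / ε)) ^ n := by
          apply pow_le_pow_left₀ _ (h1.trans h2)
          positivity
    _ = Real.exp ((n : ℝ) * (γ ^ d / ε)) := by
          rw [← Real.exp_nat_mul]
  calc ∑ d ∈ Finset.range (h₀ + 1), f d ≤ ∏ d ∈ Finset.range (h₀ + 1), f d :=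
        sum_le_prod_of_two_le hterm2
  _ ≤ ∏ d ∈ Finset.range (h₀ + 1), Real.exp ((n : ℝ) * (γ ^ d / ε)) := by
        apply Finset.prod_le_prod
        · intro i hi; have := hterm2 i hi; linarith
        · intro i _; exact hstep i
  _ = Real.exp (∑ d ∈ Finset.range (h₀ + 1), (n : ℝ) * (γ ^ d / ε)) := by
        rw [Real.exp_sum]
  _ ≤ Real.exp ((n : ℝ) / (ε * (1 - γ))) := by
        apply Real.exp_le_exp.mpr
        have hsum : ∑ d ∈ Finset.range (h₀ + 1), γ ^ d ≤ 1 / (1 - γ) := by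
          have h := geom_sum_Ico_le_of_lt_one hγ0.le hγ1 (m := 0) (n := h₀ + 1)
          rw [Finset.range_eq_Ico]
          calc ∑ d ∈ Finset.Ico 0 (h₀ + 1), γ ^ d ≤ γ ^ 0 / (1 - γ) := h
          _ = 1 / (1 - γ) := by norm_num
        have hn0 : (0 : ℝ) ≤ (n : ℝ) := Nat.cast_nonneg n
        have : ∑ d ∈ Finset.range (h₀ + 1), (n : ℝ) * (γ ^ d / ε)
            = (n : ℝ) / ε * ∑ d ∈ Finset.range (h₀ + 1), γ ^ d := by
          rw [Finset.mul_sum]; congr 1; ext d; ring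
        rw [this]
        have h1γ : 0 < 1 - γ := by linarith
        calc (n : ℝ) / ε * ∑ d ∈ Finset.range (h₀ + 1), γ ^ d
            ≤ (n : ℝ) / ε * (1 / (1 - γ)) := by
              apply mul_le_mul_of_nonneg_left hsum (by positivity)
        _ = (n : ℝ) / (ε * (1 - γ)) := by field_simp
end
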